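/- Let n ≥ 3, let f₁,...,fₙ be smooth with 3fᵢ + fⱼ nowhere zero for i ≠ j, and let φ be a smooth positive solution of φ_{,xᵢxᵢ}/φ − |∇φ|²/(2φ²) = φ² fᵢ, φ_{,xᵢxⱼ} = 0 (i ≠ j). Then for all i ≠ j and all k ≠ j: ∂/∂xₖ ( f_{j,xᵢ}/(3fⱼ + fᵢ) ) = ∂/∂xᵢ ( f_{j,xₖ}/(3fⱼ + fₖ) ). -/

import Mathlib

noncomputable def pd {n : ℕ} (φ : (Fin n → ℝ) → ℝ) (i : Fin n) (x : Fin n → ℝ) : ℝ :=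
  fderiv ℝ φ x (Pi.single i 1)

variable {n : ℕ} {g h : (Fin n → ℝ) → ℝ} {i k : Fin n} {x : Fin n → ℝ}

lemma pd_smooth (hg : ContDiff ℝ (⊤ : ℕ∞) g) (i : Fin n) : ContDiff ℝ (⊤ : ℕ∞) (pd g i) :=
  (ContinuousLinearMap.apply ℝ ℝ (Pi.single i 1 : Fin n → ℝ)).contDiff.comp
    (hg.fderiv_right (by simp))

lemma pd_const (c : ℝ) : pd (fun _ => c) i x = 0 := by
  simp [pd]

lemma pd_mul (ha : DifferentiableAt ℝ g x) (hb : DifferentiableAt ℝ h x) :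
    pd (fun y => g y * h y) i x = pd g i x * h x + g x * pd h i x := by
  unfold pd; rw [fderiv_fun_mul ha hb]; simp; ring

lemma pd_inv (hb : DifferentiableAt ℝ h x) (h0 : h x ≠ 0) :
    pd (fun y => (h y)⁻¹) i x = -pd h i x / h x ^ 2 := by
  unfold pd
  have : (fun y => (h y)⁻¹) = Inv.inv ∘ h := rfl
  rw [this, fderiv_comp x (differentiableAt_inv h0) hb, fderiv_inv' h0]
  simp only [ContinuousLinearMap.comp_apply, ContinuousLinearMap.neg_apply,
    ContinuousLinearMap.mulLeftRight_apply]
  rw [neg_div, div_eq_mul_inv, pow_two, mul_inv]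
  ring

lemma diffAt_div (ha : DifferentiableAt ℝ g x) (hb : DifferentiableAt ℝ h x) (h0 : h x ≠ 0) :
    DifferentiableAt ℝ (fun y => g y / h y) x := by
  simp only [div_eq_mul_inv]; exact ha.mul (hb.inv h0)

lemma pd_div (ha : DifferentiableAt ℝ g x) (hb : DifferentiableAt ℝ h x) (h0 : h x ≠ 0) :
    pd (fun y => g y / h y) i x = (pd g i x * h x - g x * pd h i x) / h x ^ 2 := by
  have e : (fun y => g y / h y) = fun y => g y * (h y)⁻¹ := by
    funext y; rw [div_eq_mul_inv]
  rw [e, pd_mul (h := fun y => (h y)⁻¹) ha (hb.inv h0), pd_inv hb h0]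
  field_simp
  ring

lemma pd_neg : pd (fun y => -g y) i x = -pd g i x := by
  unfold pd; rw [fderiv_fun_neg]; simp

lemma pd_sub (ha : DifferentiableAt ℝ g x) (hb : DifferentiableAt ℝ h x) :
    pd (fun y => g y - h y) i x = pd g i x - pd h i x := by
  unfold pd; rw [fderiv_fun_sub ha hb]; simp

lemma pd_sum {A : Fin n → (Fin n → ℝ) → ℝ} (hA : ∀ k, DifferentiableAt ℝ (A k) x) :
    pd (fun y => ∑ k, A k y) i x = ∑ k, pd (A k) i x := by
  unfold pd; rw [fderiv_fun_sum (fun k _ => hA k)]; simp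

lemma pd_sq (ha : DifferentiableAt ℝ g x) :
    pd (fun y => g y ^ 2) i x = 2 * g x * pd g i x := by
  have e : (fun y => g y ^ 2) = fun y => g y * g y := by funext y; ring
  rw [e, pd_mul ha ha]; ring

lemma pd_comm (hg : ContDiff ℝ (⊤ : ℕ∞) g) : pd (pd g i) k x = pd (pd g k) i x := by
  have hd : DifferentiableAt ℝ (fderiv ℝ g) x :=
    ((hg.fderiv_right (m := (⊤ : ℕ∞)) (by simp)).differentiable (by simp)) x
  have e : ∀ (a b : Fin n), pd (pd g a) b x
      = fderiv ℝ (fderiv ℝ g) x (Pi.single b 1) (Pi.single a 1) := by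
    intro a b
    unfold pd
    rw [fderiv_clm_apply hd (differentiableAt_const _)]
    simp
  rw [e i k, e k i]
  exact (hg.contDiffAt.isSymmSndFDerivAt (by simp only [minSmoothness_of_isRCLikeNormedField]; exact WithTop.coe_le_coe.mpr (le_top : (2 : ℕ∞) ≤ ⊤))) _ _

theorem stmt5 (n : ℕ) (hn : 3 ≤ n)
    (f : Fin n → (Fin n → ℝ) → ℝ)
    (hf : ∀ i, ContDiff ℝ (⊤ : ℕ∞) (f i))
    (hne : ∀ i j : Fin n, i ≠ j → ∀ x, 3 * f i x + f j x ≠ 0)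
    (φ : (Fin n → ℝ) → ℝ) (hφs : ContDiff ℝ (⊤ : ℕ∞) φ) (hφpos : ∀ x, 0 < φ x)
    (heq : ∀ i : Fin n, ∀ x, pd (pd φ i) i x / φ x
      - (∑ k, (pd φ k x) ^ 2) / (2 * φ x ^ 2) = φ x ^ 2 * f i x)
    (hmix : ∀ i j : Fin n, i ≠ j → ∀ x, pd (pd φ j) i x = 0) :
    ∀ i j k : Fin n, i ≠ j → k ≠ j → ∀ x,
      pd (fun y => pd (f j) i y / (3 * f j y + f i y)) k x
        = pd (fun y => pd (f j) k y / (3 * f j y + f k y)) i x := by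
  have hP : ∀ a, ContDiff ℝ (⊤ : ℕ∞) (pd φ a) := fun a => pd_smooth hφs a
  have hQ : ∀ a, ContDiff ℝ (⊤ : ℕ∞) (pd (pd φ a) a) := fun a => pd_smooth (hP a) a
  have dφ : ∀ x, DifferentiableAt ℝ φ x := fun x => hφs.differentiable (by simp) x
  have dP : ∀ a x, DifferentiableAt ℝ (pd φ a) x :=
    fun a x => (hP a).differentiable (by simp) x
  have dQ : ∀ a x, DifferentiableAt ℝ (pd (pd φ a) a) x :=
    fun a x => (hQ a).differentiable (by simp) x
  have dS : ∀ x, DifferentiableAt ℝ (fun y => ∑ k, pd φ k y ^ 2) x := by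
    intro x
    exact DifferentiableAt.fun_sum fun k _ => (dP k x).pow 2
  have key : ∀ i j : Fin n, i ≠ j → ∀ x,
      pd (f j) i x = -(pd φ i x / φ x) * (3 * f j x + f i x) := by
    intro i j hij x
    have hφx : φ x ≠ 0 := (hφpos x).ne'
    have hφ2 : (2 : ℝ) * φ x ^ 2 ≠ 0 := by positivity
    have dφ2 : DifferentiableAt ℝ (fun y => φ y ^ 2) x := (dφ x).pow 2
    have d2φ2 : DifferentiableAt ℝ (fun y => 2 * φ y ^ 2) x :=
      (differentiableAt_const 2).mul dφ2
    have dfj : DifferentiableAt ℝ (f j) x := (hf j).differentiable (by simp) x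
    have dA : DifferentiableAt ℝ (fun y => pd (pd φ j) j y / φ y) x :=
      diffAt_div (dQ j x) (dφ x) hφx
    have dB : DifferentiableAt ℝ (fun y => (∑ k, pd φ k y ^ 2) / (2 * φ y ^ 2)) x :=
      diffAt_div (dS x) d2φ2 hφ2
    -- third derivative vanishing
    have hQ0 : pd (pd (pd φ j) j) i x = 0 := by
      have h3 : pd (pd φ j) i = fun _ => (0 : ℝ) := funext fun y => hmix i j hij y
      calc pd (pd (pd φ j) j) i x = pd (pd (pd φ j) i) j x := pd_comm (hP j)
        _ = 0 := by rw [h3]; exact pd_const 0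
    -- derivative of the gradient-square sum
    have hSder : pd (fun y => ∑ k, pd φ k y ^ 2) i x
        = 2 * pd φ i x * pd (pd φ i) i x := by
      rw [pd_sum (A := fun k y => pd φ k y ^ 2) (fun k => (dP k x).pow 2)]
      rw [Finset.sum_eq_single i
        (fun b _ hbi => by rw [pd_sq (dP b x), hmix i b (Ne.symm hbi) x, mul_zero])
        (fun hmem => absurd (Finset.mem_univ i) hmem)]
      exact pd_sq (dP i x)
    have hfun : (fun y => pd (pd φ j) j y / φ y - (∑ k, pd φ k y ^ 2) / (2 * φ y ^ 2))
        = fun y => φ y ^ 2 * f j y := funext (heq j)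
    have E : pd (fun y => pd (pd φ j) j y / φ y
          - (∑ k, pd φ k y ^ 2) / (2 * φ y ^ 2)) i x
        = pd (fun y => φ y ^ 2 * f j y) i x := by rw [hfun]
    rw [pd_sub dA dB, pd_div (dQ j x) (dφ x) hφx, pd_div (dS x) d2φ2 hφ2,
      pd_mul dφ2 dfj, pd_mul (differentiableAt_const 2) dφ2, pd_sq (dφ x),
      pd_const, hQ0, hSder] at E
    have h1 := heq j x
    have h2 := heq i x
    field_simp at E h1 h2
    have hBig : (pd (f j) i x * φ x + pd φ i x * (3 * f j x + f i x)) * (4 * φ x ^ 7)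
        = 0 := by
      linear_combination (-φ x ^ 3) * E - (2 * φ x ^ 3 * pd φ i x) * h1
        - (2 * φ x ^ 3 * pd φ i x) * h2
    have h4 : (4 : ℝ) * φ x ^ 7 ≠ 0 := by positivity
    have hG := (mul_eq_zero.mp hBig).resolve_right h4
    field_simp
    linarith [hG]
  intro i j k hij hkj x
  have e : ∀ a : Fin n, a ≠ j →
      (fun y => pd (f j) a y / (3 * f j y + f a y)) = fun y => -(pd φ a y / φ y) := by
    intro a haj
    funext y
    rw [key a j haj y]
    exact mul_div_cancel_right₀ _ (hne j a (Ne.symm haj) y)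
  rw [e i hij, e k hkj]
  have hφx : φ x ≠ 0 := (hφpos x).ne'
  rw [pd_neg, pd_neg, pd_div (dP i x) (dφ x) hφx, pd_div (dP k x) (dφ x) hφx,
    pd_comm hφs (i := i) (k := k)]
  ring
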